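/- Consider the box [−1,3] × [−3,1] × [−4,0] ⊆ ℝ³, objective c = (−4, −1, 1), and constraint vector a = (4, 1, 1). Then max{−4z₁ − z₂ + z₃ : z ∈ [−1,3]×[−3,1]×[−4,0], 4z₁ + z₂ + z₃ ≥ 0} = 0, attained at z = (−1/4, 1, 0), whereas the unconstrained maximum max{−4z₁ − z₂ + z₃ : z ∈ [−1,3]×[−3,1]×[−4,0]} = 7. In particular, the Simul-CROWN value σ(0) is strictly smaller than the IBP/CROWN-IBP value σ(7), so the tightness inequality of Simul-CROWN over CROWN-IBP can be strict. -/

import Mathlib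

/-! The objective is `c = -a + 2 e₃`, so on the feasible set `c·z = -(a·z) + 2 z₃ ≤ 0`, with equality
at `(-1/4, 1, 0)`; without the constraint each coordinate is pushed to the endpoint favoured by the
sign of its coefficient, giving `c·(-1, -3, 0) = 7`. Since `σ` is strictly increasing, `σ 0 < σ 7`. -/

noncomputable def sigmoid (t : ℝ) : ℝ := 1 / (1 + Real.exp (-t))

theorem sigmoid_eq_real_sigmoid : sigmoid = Real.sigmoid := by
  funext t
  rw [sigmoid, Real.sigmoid, one_div]

theorem sigmoid_strictMono : StrictMono sigmoid :=
  sigmoid_eq_real_sigmoid ▸ Real.sigmoid_strictMono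

/-- Concrete instance where Simul-CROWN is strictly tighter than
IBP/CROWN-IBP: on the box `[−1,3] × [−3,1] × [−4,0]` with objective
`−4z₁ − z₂ + z₃` and constraint `4z₁ + z₂ + z₃ ≥ 0`, the constrained maximum
is `0` (attained at `(−1/4, 1, 0)`), the unconstrained maximum is `7`, and
`σ 0 < σ 7`. -/
theorem simulCROWN_strictly_tighter_example :
    IsGreatest
        {v : ℝ | ∃ z₁ z₂ z₃ : ℝ, -1 ≤ z₁ ∧ z₁ ≤ 3 ∧ -3 ≤ z₂ ∧ z₂ ≤ 1 ∧
          -4 ≤ z₃ ∧ z₃ ≤ 0 ∧ 0 ≤ 4 * z₁ + z₂ + z₃ ∧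
          v = -4 * z₁ - z₂ + z₃} 0 ∧
      ((-1 : ℝ) ≤ -1/4 ∧ (-1/4 : ℝ) ≤ 3 ∧ (-3 : ℝ) ≤ 1 ∧ (1 : ℝ) ≤ 1 ∧
        (-4 : ℝ) ≤ 0 ∧ (0 : ℝ) ≤ 0 ∧
        (0 : ℝ) ≤ 4 * (-1/4) + 1 + 0 ∧
        -4 * (-1/4 : ℝ) - 1 + 0 = 0) ∧
      IsGreatest
        {v : ℝ | ∃ z₁ z₂ z₃ : ℝ, -1 ≤ z₁ ∧ z₁ ≤ 3 ∧ -3 ≤ z₂ ∧ z₂ ≤ 1 ∧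
          -4 ≤ z₃ ∧ z₃ ≤ 0 ∧ v = -4 * z₁ - z₂ + z₃} 7 ∧
      sigmoid 0 < sigmoid 7 := by
  refine ⟨⟨⟨-1/4, 1, 0, by norm_num⟩, ?_⟩, by norm_num,
    ⟨⟨-1, -3, 0, by norm_num⟩, ?_⟩, sigmoid_strictMono (by norm_num)⟩
  · rintro v ⟨z₁, z₂, z₃, -, -, -, -, -, hz₃, hconstraint, rfl⟩
    have dual_certificate : -4 * z₁ - z₂ + z₃ = -(4 * z₁ + z₂ + z₃) + 2 * z₃ := by ring
    linarith
  · rintro v ⟨z₁, z₂, z₃, hz₁, -, hz₂, -, -, hz₃, rfl⟩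
    linarith
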